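/- Let V be a finite-dimensional real inner product space and let U be a linear subspace of V. Let E and E₁, E₂, E₃, … be linear subspaces of V, each of which is a complement of U (that is, E ⊕ U = V and Eᵢ ⊕ U = V for all i). If ‖P_{Eᵢ} − P_E‖_op → 0 as i → ∞, then ‖Qᵢ − Q‖_op → 0, where Q (respectively Qᵢ) denotes the projection of V onto E along U (respectively onto Eᵢ along U). -/

import Mathlib

open Filter

/-- The orthogonal projection of a finite-dimensional real inner product space onto a
subspace, regarded as a continuous linear endomorphism. -/
noncomputable def projOp {V : Type*} [NormedAddCommGroup V] [InnerProductSpace ℝ V]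
    [FiniteDimensional ℝ V] (E : Submodule ℝ V) : V →L[ℝ] V :=
  E.subtypeL.comp (E.orthogonalProjection)

/-- The (oblique) projection of `V` onto `E` along `U`, for a decomposition
`V = E ⊕ U`, regarded as a continuous linear endomorphism. -/
noncomputable def obliqueProj {V : Type*} [NormedAddCommGroup V] [InnerProductSpace ℝ V]
    [FiniteDimensional ℝ V] {E U : Submodule ℝ V} (h : IsCompl E U) : V →L[ℝ] V :=
  LinearMap.toContinuousLinearMap (E.subtype ∘ₗ (E.linearProjOfIsCompl U h))

section aux
variable {V : Type*} [NormedAddCommGroup V] [InnerProductSpace ℝ V]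
    [FiniteDimensional ℝ V]

lemma obliqueProj_apply {E U : Submodule ℝ V} (h : IsCompl E U) (v : V) :
    obliqueProj h v = (E.linearProjOfIsCompl U h v : V) := rfl

lemma obliqueProj_mem {E U : Submodule ℝ V} (h : IsCompl E U) (v : V) :
    obliqueProj h v ∈ E := (E.linearProjOfIsCompl U h v).2

lemma obliqueProj_apply_mem_left {E U : Submodule ℝ V} (h : IsCompl E U) {v : V}
    (hv : v ∈ E) : obliqueProj h v = v := by
  rw [obliqueProj_apply]
  exact congrArg _ (Submodule.linearProjOfIsCompl_apply_left h ⟨v, hv⟩)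

lemma obliqueProj_apply_mem_right {E U : Submodule ℝ V} (h : IsCompl E U) {v : V}
    (hv : v ∈ U) : obliqueProj h v = 0 := by
  rw [obliqueProj_apply, show E.linearProjOfIsCompl U h v = 0 from Submodule.projectionOnto_apply_of_mem_right h hv]
  rfl

lemma sub_obliqueProj_mem {E U : Submodule ℝ V} (h : IsCompl E U) (v : V) :
    v - obliqueProj h v ∈ U := by
  have h1 := Submodule.projection_add_projection_eq_self h v
  have h2 : v - (E.linearProjOfIsCompl U h v : V) = (U.linearProjOfIsCompl E h.symm v : V) :=
    sub_eq_iff_eq_add'.2 h1.symm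
  rw [obliqueProj_apply, h2]
  exact (U.linearProjOfIsCompl E h.symm v).2

lemma projOp_apply_mem {E : Submodule ℝ V} (v : V) (hv : v ∈ E) : projOp E v = v := by
  simp [projOp, Submodule.orthogonalProjection_mem_subspace_eq_self (⟨v, hv⟩ : E)]

lemma projOp_mem {E : Submodule ℝ V} (v : V) : projOp E v ∈ E := (E.orthogonalProjection v).2

lemma key {E F U : Submodule ℝ V} (hE : IsCompl E U) (hF : IsCompl F U) :
    obliqueProj hF - obliqueProj hE =
      (obliqueProj hF - 1) ∘L ((projOp E - projOp F) ∘L obliqueProj hE) := by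
  ext v
  simp only [ContinuousLinearMap.comp_apply, ContinuousLinearMap.sub_apply]
  set x : V := obliqueProj hE v with hx
  have hxE : x ∈ E := obliqueProj_mem hE v
  have h1 : projOp E x = x := projOp_apply_mem x hxE
  have h2 : obliqueProj hF (projOp F x) = projOp F x :=
    obliqueProj_apply_mem_left hF (projOp_mem x)
  have h3 : obliqueProj hF (v - x) = 0 := obliqueProj_apply_mem_right hF (sub_obliqueProj_mem hE v)
  have h4 : obliqueProj hF v = obliqueProj hF x := by
    have h5 := map_sub (obliqueProj hF) v x
    rw [h3] at h5
    exact (sub_eq_zero.mp h5.symm)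
  simp only [ContinuousLinearMap.comp_apply, ContinuousLinearMap.sub_apply,
    ContinuousLinearMap.one_apply, map_sub, h1, h2, h4]
  abel

end aux

/-- If `E` and each `Eᵢ` are complements of `U` in a
finite-dimensional real inner product space `V`, and the orthogonal projections onto
`Eᵢ` converge in operator norm to the orthogonal projection onto `E`, then the
projections onto `Eᵢ` along `U` converge in operator norm to the projection onto `E`
along `U`. -/
theorem stmt4 {V : Type*} [NormedAddCommGroup V] [InnerProductSpace ℝ V]
    [FiniteDimensional ℝ V] (U E : Submodule ℝ V) (F : ℕ → Submodule ℝ V)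
    (hE : IsCompl E U) (hF : ∀ i, IsCompl (F i) U)
    (hconv : Tendsto (fun i => ‖projOp (F i) - projOp E‖) atTop (nhds 0)) :
    Tendsto (fun i => ‖obliqueProj (hF i) - obliqueProj hE‖) atTop (nhds 0) := by
  set C := ‖obliqueProj hE‖ with hC
  have hC0 : 0 ≤ C := norm_nonneg _
  set δ : ℕ → ℝ := fun i => ‖projOp (F i) - projOp E‖ with hδ
  have hδ0 : ∀ i, 0 ≤ δ i := fun i => norm_nonneg _
  have hbound : ∀ i, ‖obliqueProj (hF i) - obliqueProj hE‖ ≤ (C + 1) * δ i * ‖obliqueProj (hF i)‖ := by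
    intro i
    have hk := key (hF i) hE
    calc ‖obliqueProj (hF i) - obliqueProj hE‖ = ‖obliqueProj hE - obliqueProj (hF i)‖ := by
          rw [← norm_neg, neg_sub]
      _ = ‖(obliqueProj hE - 1) ∘L ((projOp (F i) - projOp E) ∘L obliqueProj (hF i))‖ := by
          rw [hk]
      _ ≤ ‖obliqueProj hE - 1‖ * ‖(projOp (F i) - projOp E) ∘L obliqueProj (hF i)‖ :=
          ContinuousLinearMap.opNorm_comp_le _ _
      _ ≤ ‖obliqueProj hE - 1‖ * (δ i * ‖obliqueProj (hF i)‖) := by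
          gcongr
          exact ContinuousLinearMap.opNorm_comp_le _ _
      _ ≤ (C + 1) * (δ i * ‖obliqueProj (hF i)‖) := by
          apply mul_le_mul_of_nonneg_right _ (by positivity)
          exact (norm_sub_le _ _).trans
            (add_le_add le_rfl (by exact ContinuousLinearMap.norm_id_le (𝕜 := ℝ) (E := V)))
      _ = (C + 1) * δ i * ‖obliqueProj (hF i)‖ := by ring
  have hev : ∀ᶠ i in atTop, δ i ≤ 1 / (2 * (C + 1)) := by
    have h := hconv.eventually (eventually_le_nhds (show (0:ℝ) < 1 / (2 * (C + 1)) by positivity))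
    exact h
  have hfinal : ∀ᶠ i in atTop, ‖obliqueProj (hF i) - obliqueProj hE‖ ≤ 2 * C * ((C + 1) * δ i) := by
    filter_upwards [hev] with i hi
    have hQ : ‖obliqueProj (hF i)‖ ≤ 2 * C := by
      have h1 : ‖obliqueProj (hF i)‖ ≤ C + ‖obliqueProj (hF i) - obliqueProj hE‖ := by
        calc ‖obliqueProj (hF i)‖ = ‖obliqueProj hE + (obliqueProj (hF i) - obliqueProj hE)‖ :=
              congrArg norm (by abel)
          _ ≤ C + ‖obliqueProj (hF i) - obliqueProj hE‖ := norm_add_le _ _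
      have h2 := hbound i
      have h3 : (C + 1) * δ i ≤ 1 / 2 := by
        have : (C + 1) * δ i ≤ (C + 1) * (1 / (2 * (C + 1))) :=
          mul_le_mul_of_nonneg_left hi (by positivity)
        calc (C + 1) * δ i ≤ (C + 1) * (1 / (2 * (C + 1))) := this
          _ = 1 / 2 := by field_simp
      nlinarith [norm_nonneg (obliqueProj (hF i)), hδ0 i]
    calc ‖obliqueProj (hF i) - obliqueProj hE‖ ≤ (C + 1) * δ i * ‖obliqueProj (hF i)‖ := hbound i
      _ ≤ (C + 1) * δ i * (2 * C) := by
          have : 0 ≤ (C + 1) * δ i := by positivity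
          exact mul_le_mul_of_nonneg_left hQ this
      _ = 2 * C * ((C + 1) * δ i) := by ring
  have hg : Tendsto (fun i => 2 * C * ((C + 1) * δ i)) atTop (nhds 0) := by
    have := (hconv.const_mul (C + 1)).const_mul (2 * C)
    simpa using this
  exact squeeze_zero' (Eventually.of_forall fun i => norm_nonneg _) hfinal hg
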